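/- Let H be the lower-bound construction graph built from G. For vertices u₁ ∈ W_i and u₂ ∈ Y_j^α (α ∈ {1,2}), if for every vertex w ∈ W_i there exists y ∈ Y_j^α with N(w) ∩ S = N(y) ∩ S, then for all β ∈ [k], N(w_{(i,β)}) ∩ S = N(y_{(j,β)}^α) ∩ S; i.e., the cliques W_i and Y_j^α encode the same vertex of G. In particular, combined with the uniqueness property, W_i and Y_j^α encode the same binary string, so Y_j^α corresponds to the vertex v_i. -/
import Mathlib


/-- Vertices of the lower-bound construction graph `H` built from a graph on `n`
vertices with `m` edges and parameter `k`. -/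
inductive HV (n m k : ℕ) : Type
  | s : Fin (2*k) → HV n m k
  | w : Fin n → Fin k → HV n m k
  | wleaf : Fin n → Fin k → HV n m k
  | y1 : Fin m → Fin k → HV n m k
  | y2 : Fin m → Fin k → HV n m k
  | yc : Fin m → HV n m k
  | y1leaf : Fin m → Fin k → Fin 2 → HV n m k
  | y2leaf : Fin m → Fin k → Fin 3 → HV n m k
  | ycleaf : Fin m → Fin 4 → HV n m k
  deriving DecidableEq, Fintype

/-- Adjacency between the `β`-th vertex of a block encoding the number `i` and the
vertex `s_γ` of `S`: a matching with the first half of `S`, and binary encoding of `i`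
(least significant bit first, bit `β*k+γ'` for the `γ'`-th vertex of the second half). -/
def sadj (n k : ℕ) (i : Fin n) (β : Fin k) (γ : Fin (2*k)) : Prop :=
  γ.val = β.val ∨ (k ≤ γ.val ∧ Nat.testBit i.val (β.val * k + (γ.val - k)) = true)

/-- The base (asymmetric) adjacency relation of the construction; `ep j` gives the pair of
endpoints of the `j`-th edge of `G`. -/
def hrel (n m k : ℕ) (ep : Fin m → Fin n × Fin n) : HV n m k → HV n m k → Prop
  | HV.w i _, HV.w i' _ => i = i'
  | HV.w i β, HV.s γ => sadj n k i β γ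
  | HV.wleaf i β, HV.w i' β' => i = i' ∧ β = β'
  | HV.y1 j _, HV.y1 j' _ => j = j'
  | HV.y2 j _, HV.y2 j' _ => j = j'
  | HV.yc j, HV.y1 j' _ => j = j'
  | HV.yc j, HV.y2 j' _ => j = j'
  | HV.y1 j β, HV.s γ => sadj n k (ep j).1 β γ
  | HV.y2 j β, HV.s γ => sadj n k (ep j).2 β γ
  | HV.y1leaf j β _, HV.y1 j' β' => j = j' ∧ β = β'
  | HV.y2leaf j β _, HV.y2 j' β' => j = j' ∧ β = β'
  | HV.ycleaf j _, HV.yc j' => j = j'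
  | _, _ => False

/-- The lower-bound construction graph `H`. -/
def Hgraph (n m k : ℕ) (ep : Fin m → Fin n × Fin n) : SimpleGraph (HV n m k) :=
  SimpleGraph.fromRel (hrel n m k ep)

/-- The `β`-th vertex of the clique `Y_j^α` (`α ∈ {1,2}` as `Fin 2`). -/
def yvert (n m k : ℕ) (α : Fin 2) (j : Fin m) (β : Fin k) : HV n m k :=
  if α = 0 then HV.y1 j β else HV.y2 j β

/-- The endpoint of the `j`-th edge encoded by `Y_j^α`. -/
def endv (n m : ℕ) (ep : Fin m → Fin n × Fin n) (α : Fin 2) (j : Fin m) : Fin n :=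
  if α = 0 then (ep j).1 else (ep j).2

lemma adj_w_s (n m k : ℕ) (ep : Fin m → Fin n × Fin n) (i : Fin n) (β : Fin k)
    (γ : Fin (2*k)) :
    (Hgraph n m k ep).Adj (HV.w i β) (HV.s γ) ↔ sadj n k i β γ := by
  simp [Hgraph, SimpleGraph.fromRel_adj, hrel]

lemma adj_y_s (n m k : ℕ) (ep : Fin m → Fin n × Fin n) (α : Fin 2) (j : Fin m) (β : Fin k)
    (γ : Fin (2*k)) :
    (Hgraph n m k ep).Adj (yvert n m k α j β) (HV.s γ) ↔ sadj n k (endv n m ep α j) β γ := by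
  by_cases hα : α = 0 <;>
    simp [Hgraph, SimpleGraph.fromRel_adj, hrel, yvert, endv, hα]

lemma sadj_ext_beta (n k : ℕ) (i i' : Fin n) (β β' : Fin k)
    (H : ∀ γ : Fin (2*k), sadj n k i β γ ↔ sadj n k i' β' γ) : β = β' := by
  have hβ : β.val < k := β.isLt
  have hγlt : β.val < 2*k := by omega
  have h1 : sadj n k i β ⟨β.val, hγlt⟩ := Or.inl rfl
  have h2 := (H ⟨β.val, hγlt⟩).1 h1
  rcases h2 with h2 | h2
  · exact Fin.ext (h2 : β.val = β'.val)
  · have : k ≤ β.val := h2.1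
    omega

lemma sadj_ext_bit (n k : ℕ) (i i' : Fin n) (β : Fin k)
    (H : ∀ γ : Fin (2*k), sadj n k i β γ ↔ sadj n k i' β γ)
    (γ' : ℕ) (hγ' : γ' < k) :
    Nat.testBit i.val (β.val * k + γ') = Nat.testBit i'.val (β.val * k + γ') := by
  have hγlt : k + γ' < 2*k := by omega
  have hβ : β.val < k := β.isLt
  have H' := H ⟨k + γ', hγlt⟩
  simp only [sadj] at H'
  have hne : ¬ (k + γ' = β.val) := by omega
  have hle : k ≤ k + γ' := Nat.le_add_right _ _
  have hsub : k + γ' - k = γ' := by omega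
  rw [hsub] at H'
  have : (Nat.testBit i.val (β.val * k + γ') = true) ↔
      (Nat.testBit i'.val (β.val * k + γ') = true) := by
    constructor
    · intro hb
      rcases (H'.1 (Or.inr ⟨hle, hb⟩)) with h | h
      · omega
      · exact h.2
    · intro hb
      rcases (H'.2 (Or.inr ⟨hle, hb⟩)) with h | h
      · omega
      · exact h.2
  exact Bool.eq_iff_iff.mpr (by simpa using this)

/-- If every vertex of `W_i` has the same `S`-neighborhood as some vertex of `Y_j^α`,
then the correspondence respects the numbering (`N(w_{(i,β)}) ∩ S = N(y_{(j,β)}^α) ∩ S`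
for all `β`), and `Y_j^α` encodes the same binary string as `W_i`, so it corresponds to
the vertex `v_i` (the `α`-endpoint of the `j`-th edge is `i`). -/
theorem WY_same_encoding (n m k : ℕ) (ep : Fin m → Fin n × Fin n)
    (hk : k = ⌈Real.sqrt (Real.logb 2 n)⌉₊) (hn : 1 ≤ n)
    (i : Fin n) (j : Fin m) (α : Fin 2)
    (h : ∀ β : Fin k, ∃ β' : Fin k,
      {γ : Fin (2 * k) | (Hgraph n m k ep).Adj (HV.w i β) (HV.s γ)} =
      {γ : Fin (2 * k) | (Hgraph n m k ep).Adj (yvert n m k α j β') (HV.s γ)}) :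
    (∀ β : Fin k,
      {γ : Fin (2 * k) | (Hgraph n m k ep).Adj (HV.w i β) (HV.s γ)} =
      {γ : Fin (2 * k) | (Hgraph n m k ep).Adj (yvert n m k α j β) (HV.s γ)}) ∧
    endv n m ep α j = i := by
  -- translate adjacency-set hypotheses into sadj statements
  have hset : ∀ (β β' : Fin k),
      ({γ : Fin (2 * k) | (Hgraph n m k ep).Adj (HV.w i β) (HV.s γ)} =
        {γ : Fin (2 * k) | (Hgraph n m k ep).Adj (yvert n m k α j β') (HV.s γ)}) ↔
      (∀ γ : Fin (2*k), sadj n k i β γ ↔ sadj n k (endv n m ep α j) β' γ) := by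
    intro β β'
    rw [Set.ext_iff]
    constructor
    · intro hh γ
      simpa [adj_w_s, adj_y_s] using hh γ
    · intro hh γ
      simpa [adj_w_s, adj_y_s] using hh γ
  have hfix : ∀ β : Fin k,
      ∀ γ : Fin (2*k), sadj n k i β γ ↔ sadj n k (endv n m ep α j) β γ := by
    intro β
    obtain ⟨β', hβ'⟩ := h β
    have := (hset β β').1 hβ'
    have hbb : β = β' := sadj_ext_beta n k i (endv n m ep α j) β β' this
    subst hbb; exact this
  have hfirst : ∀ β : Fin k,
      {γ : Fin (2 * k) | (Hgraph n m k ep).Adj (HV.w i β) (HV.s γ)} =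
      {γ : Fin (2 * k) | (Hgraph n m k ep).Adj (yvert n m k α j β) (HV.s γ)} := by
    intro β; exact (hset β β).2 (hfix β)
  refine ⟨hfirst, ?_⟩
  -- bound: n ≤ 2 ^ (k*k)
  have hlogb : Real.logb 2 n ≤ (k:ℝ)^2 := by
    have h0 : (0:ℝ) ≤ Real.logb 2 n := by
      apply Real.logb_nonneg (by norm_num)
      exact_mod_cast hn
    have hs : Real.sqrt (Real.logb 2 n) ≤ (k:ℝ) := by
      rw [hk]; exact Nat.le_ceil _
    calc Real.logb 2 n = Real.sqrt (Real.logb 2 n) ^ 2 := (Real.sq_sqrt h0).symm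
      _ ≤ (k:ℝ)^2 := by
          apply pow_le_pow_left₀ (Real.sqrt_nonneg _) hs
  have hnle : n ≤ 2 ^ (k*k) := by
    have hx : (n:ℝ) ≤ (2:ℝ) ^ ((k*k : ℕ) : ℝ) :=
      (Real.logb_le_iff_le_rpow (by norm_num : (1:ℝ) < 2)
        (by exact_mod_cast hn : (0:ℝ) < n)).1 (by
          calc Real.logb 2 n ≤ (k:ℝ)^2 := hlogb
            _ = ((k*k : ℕ) : ℝ) := by push_cast; ring)
    rw [Real.rpow_natCast] at hx
    exact_mod_cast hx
  have hbit : ∀ p : ℕ, Nat.testBit (endv n m ep α j).val p = Nat.testBit i.val p := by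
    intro p
    by_cases hp : p < k*k
    · have hkpos : 0 < k := by
        rcases Nat.eq_zero_or_pos k with h0 | h0
        · subst h0; simp at hp
        · exact h0
      have hdiv : p / k < k := (Nat.div_lt_iff_lt_mul hkpos).2 hp
      have hmod : p % k < k := Nat.mod_lt _ hkpos
      have := sadj_ext_bit n k i (endv n m ep α j) ⟨p / k, hdiv⟩ (hfix ⟨p / k, hdiv⟩)
        (p % k) hmod
      have hpe : p / k * k + p % k = p := by
        have h1 := Nat.div_add_mod p k
        have h2 : p / k * k = k * (p / k) := Nat.mul_comm _ _
        omega
      rw [hpe] at this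
      exact this.symm
    · have h1 : (endv n m ep α j).val < 2 ^ p := by
        have := (endv n m ep α j).isLt
        calc (endv n m ep α j).val < n := this
          _ ≤ 2 ^ (k*k) := hnle
          _ ≤ 2 ^ p := Nat.pow_le_pow_right (by norm_num) (by omega)
      have h2 : i.val < 2 ^ p := by
        calc i.val < n := i.isLt
          _ ≤ 2 ^ (k*k) := hnle
          _ ≤ 2 ^ p := Nat.pow_le_pow_right (by norm_num) (by omega)
      rw [Nat.testBit_lt_two_pow h1, Nat.testBit_lt_two_pow h2]
  exact Fin.ext (Nat.eq_of_testBit_eq hbit)
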